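/- arXiv:1708.04976 — 6 statements merged into one kernel-verified Lean document; each statement's English description precedes it below -/
import Mathlib

section
/- If P is a congruence, c a constant, y a variable, and t a term containing y with t ≠ y, then c is not congruent to t[y←c] in P. -/
inductive Term (C X : Type) : Type
  | const : C → Term C X
  | var : X → Term C X
  | add : Term C X → Term C X → Term C X

namespace Term

/-- `occurs y t` : the variable `y` appears in the term `t`. -/
def occurs {C X : Type} (y : X) : Term C X → Prop
  | const _ => False
  | var x => x = y
  | add t₁ t₂ => occurs y t₁ ∨ occurs y t₂

/-- Substitution `t[y ← β]`. -/
def subst {C X : Type} [DecidableEq X] (y : X) (β : Term C X) : Term C X → Term C X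
  | const c => const c
  | var x => if x = y then β else var x
  | add t₁ t₂ => add (subst y β t₁) (subst y β t₂)

/-- A congruence of terms, given by its equivalence relation. -/
structure IsCongruence {C X : Type} (r : Term C X → Term C X → Prop) : Prop where
  equiv : Equivalence r
  const_eq : ∀ c c' : C, r (const c) (const c') → c = c'
  add_iff : ∀ t t' s s' : Term C X, (r t t' ∧ r s s') ↔ r (add t s) (add t' s')
  const_cases : ∀ (c : C) (t : Term C X), r t (const c) → t = const c ∨ ∃ x : X, t = var x

/-- Refinement order on congruences (as equivalence relations):
`Refines p q` means every class of `p` is contained in a class of `q`. -/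
def Refines {C X : Type} (p q : Term C X → Term C X → Prop) : Prop :=
  ∀ t t' : Term C X, p t t' → q t t'

end Term

open Term in
/-- a constant is not congruent to `t[y←c]` when `y` occurs in `t` and `t ≠ y`. -/
theorem const_not_congruent_subst {C X : Type} [Countable C] [Countable X] [DecidableEq X]
    (r : Term C X → Term C X → Prop) (h : IsCongruence r)
    (c : C) (y : X) (t : Term C X) (hy : occurs y t) (hne : t ≠ var y) :
    ¬ r (const c) (subst y (const c) t) := by
  intro hr
  cases t with
  | const c' => exact hy
  | var x => exact hne (by simpa [occurs] using hy ▸ rfl)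
  | add t₁ t₂ =>
    rcases h.const_cases c _ (h.equiv.symm hr) with h1 | ⟨x, h1⟩ <;> simp [subst] at h1
end

section
/- If P is a congruence, y a variable, and β a term not containing y, then the relation defined by t ≅' t' iff t[y←β] ≅_P t'[y←β] is again a congruence (well-definedness of transfer functions). -/
/-- Transfer function `f_{y=β}` applied to a relation. -/
def transfer {C X : Type} [DecidableEq X] (y : X) (β : Term C X)
    (r : Term C X → Term C X → Prop) : Term C X → Term C X → Prop :=
  fun t t' => r (Term.subst y β t) (Term.subst y β t')

open Term in
/-- transfer functions are well defined: `f_{y=β}(P)` is a congruence. -/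
theorem transfer_isCongruence {C X : Type} [Countable C] [Countable X] [DecidableEq X]
    (r : Term C X → Term C X → Prop) (h : IsCongruence r)
    (y : X) (β : Term C X) (hβ : ¬ occurs y β) :
    IsCongruence (transfer y β r) := by
  constructor
  · exact ⟨fun t => h.equiv.refl _, fun a => h.equiv.symm a, fun a b => h.equiv.trans a b⟩
  · intro c c' hr
    exact h.const_eq c c' hr
  · intro t t' s s'
    exact h.add_iff _ _ _ _
  · intro c t hr
    have := h.const_cases c (Term.subst y β t) hr
    cases t with
    | const c' =>
      simp only [Term.subst] at this
      rcases this with h1 | ⟨x, h1⟩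
      · left; exact h1
      · cases h1
    | var x => right; exact ⟨x, rfl⟩
    | add a b =>
      simp only [Term.subst] at this
      rcases this with h1 | ⟨x, h1⟩ <;> cases h1
end

section
/- For any congruence P and variable y, the relation defined by t ≅' t' iff (t ≅_P t' and for every term β not containing y, t[y←β] ≅_P t'[y←β]) is a congruence (well-definedness of the non-deterministic assignment f_{y=*}). -/
/-- Non-deterministic assignment `f_{y=*}` applied to a relation. -/
def ndet {C X : Type} [DecidableEq X] (y : X)
    (r : Term C X → Term C X → Prop) : Term C X → Term C X → Prop :=
  fun t t' => r t t' ∧ ∀ β : Term C X, ¬ Term.occurs y β →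
    r (Term.subst y β t) (Term.subst y β t')

open Term in
/-- the non-deterministic assignment `f_{y=*}(P)` is a congruence. -/
theorem ndet_isCongruence {C X : Type} [Countable C] [Countable X] [DecidableEq X]
    (r : Term C X → Term C X → Prop) (h : IsCongruence r) (y : X) :
    IsCongruence (ndet y r) := by
  constructor
  · constructor
    · exact fun t => ⟨h.equiv.refl t, fun β _ => h.equiv.refl _⟩
    · exact fun ⟨h1, h2⟩ => ⟨h.equiv.symm h1, fun β hβ => h.equiv.symm (h2 β hβ)⟩
    · exact fun ⟨h1, h2⟩ ⟨h3, h4⟩ =>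
        ⟨h.equiv.trans h1 h3, fun β hβ => h.equiv.trans (h2 β hβ) (h4 β hβ)⟩
  · exact fun c c' hc => h.const_eq c c' hc.1
  · intro t t' s s'
    constructor
    · rintro ⟨⟨h1, h2⟩, ⟨h3, h4⟩⟩
      refine ⟨(h.add_iff t t' s s').1 ⟨h1, h3⟩, fun β hβ => ?_⟩
      simpa [Term.subst] using (h.add_iff _ _ _ _).1 ⟨h2 β hβ, h4 β hβ⟩
    · rintro ⟨h1, h2⟩
      obtain ⟨ha, hb⟩ := (h.add_iff t t' s s').2 h1
      refine ⟨⟨ha, fun β hβ => ?_⟩, ⟨hb, fun β hβ => ?_⟩⟩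
      · exact ((h.add_iff _ _ _ _).2 (by simpa [Term.subst] using h2 β hβ)).1
      · exact ((h.add_iff _ _ _ _).2 (by simpa [Term.subst] using h2 β hβ)).2
  · exact fun c t ht => h.const_cases c t ht.1
end

section
/- Let P be a congruence, t, t' terms, y a variable, and c1 ≠ c2 two distinct constants. Then t[y←c1] ≅_P t'[y←c1] and t[y←c2] ≅_P t'[y←c2] together hold if and only if t[y←β] ≅_P t'[y←β] for every term β not containing y (two distinct constant substitutions suffice to test all substitutions). -/
open Term in
lemma tc_aux {C X : Type} [DecidableEq X] {r : Term C X → Term C X → Prop}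
    (h : IsCongruence r) {y : X} {c₁ c₂ : C} (hc : c₁ ≠ c₂) (β : Term C X) :
    ∀ u : Term C X, r (subst y (const c₁) u) (subst y (const c₂) u) →
      r (subst y (const c₁) u) (subst y β u)
  | const c, _ => h.equiv.refl _
  | var x, hr => by
      by_cases hx : x = y
      · subst hx; simp [subst] at hr; exact absurd (h.const_eq _ _ hr) hc
      · simpa [subst, hx] using h.equiv.refl (var x : Term C X)
  | add a b, hr => by
      have hd := (h.add_iff _ _ _ _).mpr hr
      exact (h.add_iff _ _ _ _).mp ⟨tc_aux h hc β a hd.1, tc_aux h hc β b hd.2⟩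

open Term in
lemma tc_main {C X : Type} [DecidableEq X] {r : Term C X → Term C X → Prop}
    (h : IsCongruence r) {y : X} {c₁ c₂ : C} (hc : c₁ ≠ c₂) (β : Term C X) :
    ∀ t t' : Term C X,
      r (subst y (const c₁) t) (subst y (const c₁) t') →
      r (subst y (const c₂) t) (subst y (const c₂) t') →
      r (subst y β t) (subst y β t') := by
  intro t
  induction t with
  | const c =>
    intro t' h1 h2
    cases t' with
    | const c' =>
      simp only [subst] at h1 ⊢
      rw [h.const_eq _ _ h1]; exact h.equiv.refl _
    | var x =>
      by_cases hx : x = y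
      · subst hx
        simp [subst] at h1 h2
        exact absurd ((h.const_eq _ _ h1).symm.trans (h.const_eq _ _ h2)) hc
      · simpa [subst, hx] using h1
    | add a b =>
      exfalso
      simp only [subst] at h1
      rcases h.const_cases _ _ (h.equiv.symm h1) with h' | ⟨x, h'⟩ <;> simp at h'
  | var x =>
    intro t' h1 h2
    by_cases hx : x = y
    · cases t' with
      | const c' =>
        simp only [subst, if_pos hx] at h1 h2
        exact absurd ((h.const_eq _ _ h1).trans (h.const_eq _ _ h2).symm) hc
      | var x' =>
        by_cases hx' : x' = y
        · simp only [subst, if_pos hx, if_pos hx']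
          exact h.equiv.refl _
        · simp only [subst, if_pos hx, if_neg hx'] at h1 h2
          exact absurd (h.const_eq _ _ (h.equiv.trans h1 (h.equiv.symm h2))) hc
      | add a b =>
        exfalso
        simp only [subst, if_pos hx] at h1
        rcases h.const_cases _ _ (h.equiv.symm h1) with h' | ⟨z, h'⟩ <;> simp at h'
    · simp only [subst, if_neg hx] at h1 h2 ⊢
      cases t' with
      | const c' => exact h1
      | var x' =>
        by_cases hx' : x' = y
        · subst hx'
          simp only [subst, if_pos rfl] at h1 h2
          exact absurd (h.const_eq _ _ (h.equiv.trans (h.equiv.symm h1) h2)) hc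
        · simpa [subst, hx'] using h1
      | add a b =>
        have h12 := h.equiv.trans (h.equiv.symm h1) h2
        exact h.equiv.trans h1 (tc_aux h hc β _ h12)
  | add t₁ t₂ ih₁ ih₂ =>
    intro t' h1 h2
    cases t' with
    | const c' =>
      exfalso
      simp only [subst] at h1
      rcases h.const_cases _ _ h1 with h' | ⟨x, h'⟩ <;> simp at h'
    | var x' =>
      by_cases hx' : x' = y
      · exfalso
        subst hx'
        simp only [subst, if_pos rfl] at h1
        rcases h.const_cases _ _ h1 with h' | ⟨x, h'⟩ <;> simp at h'
      · have h1' : r (subst y (const c₁) (t₁.add t₂)) (var x') := by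
          simpa [subst, hx'] using h1
        have h2' : r (subst y (const c₂) (t₁.add t₂)) (var x') := by
          simpa [subst, hx'] using h2
        have h12 := h.equiv.trans h1' (h.equiv.symm h2')
        have hb := tc_aux h hc β _ h12
        have hg : r (subst y β (t₁.add t₂)) (var x') :=
          h.equiv.trans (h.equiv.symm hb) h1'
        simpa [subst, hx'] using hg
    | add a b =>
      simp only [subst] at h1 h2 ⊢
      have d1 := (h.add_iff _ _ _ _).mpr h1
      have d2 := (h.add_iff _ _ _ _).mpr h2
      exact (h.add_iff _ _ _ _).mp ⟨ih₁ a d1.1 d2.1, ih₂ b d1.2 d2.2⟩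

open Term in
/-- two distinct constant substitutions suffice to test all substitutions. -/
theorem two_constants_suffice {C X : Type} [Countable C] [Countable X] [DecidableEq X]
    (r : Term C X → Term C X → Prop) (h : IsCongruence r)
    (t t' : Term C X) (y : X) (c₁ c₂ : C) (hc : c₁ ≠ c₂) :
    (r (subst y (const c₁) t) (subst y (const c₁) t') ∧
      r (subst y (const c₂) t) (subst y (const c₂) t')) ↔
    (∀ β : Term C X, ¬ occurs y β → r (subst y β t) (subst y β t')) := by
  constructor
  · rintro ⟨h1, h2⟩ β _
    exact tc_main h hc β t t' h1 h2
  · intro H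
    exact ⟨H (const c₁) (fun h => h), H (const c₂) (fun h => h)⟩
end

section
/- For any congruence P, variable y, and distinct constants c1 ≠ c2, the non-deterministic assignment satisfies f_{y=*}(P) = P ∧ f_{y=c1}(P) ∧ f_{y=c2}(P). -/
open Term in
lemma subst_of_not_occurs {C X : Type} [DecidableEq X] (y : X) (β : Term C X)
    (t : Term C X) (ht : ¬ occurs y t) : subst y β t = t := by
  induction t with
  | const c => rfl
  | var x =>
      simp only [occurs] at ht
      simp [subst, ht]
  | add a b iha ihb =>
      simp only [occurs] at ht
      push_neg at ht
      simp [subst, iha ht.1, ihb ht.2]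

open Term in
lemma occurs_contra {C X : Type} [DecidableEq X]
    (r : Term C X → Term C X → Prop) (h : IsCongruence r)
    (y : X) (c₁ c₂ : C) (hc : c₁ ≠ c₂) :
    ∀ t : Term C X, occurs y t →
      r (subst y (const c₁) t) (subst y (const c₂) t) → False := by
  intro t
  induction t with
  | const c => intro hocc; exact hocc.elim
  | var x =>
      intro hocc hr
      simp only [occurs] at hocc
      subst hocc
      simp only [subst, if_pos rfl] at hr
      exact hc (h.const_eq _ _ hr)
  | add a b iha ihb =>
      intro hocc hr
      simp only [subst] at hr
      rw [← h.add_iff] at hr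
      cases hocc with
      | inl ha => exact iha ha hr.1
      | inr hb => exact ihb hb hr.2

open Term in
lemma key_lemma {C X : Type} [DecidableEq X]
    (r : Term C X → Term C X → Prop) (h : IsCongruence r)
    (y : X) (c₁ c₂ : C) (hc : c₁ ≠ c₂) :
    ∀ t t' : Term C X, r t t' →
      r (subst y (const c₁) t) (subst y (const c₁) t') →
      r (subst y (const c₂) t) (subst y (const c₂) t') →
      ∀ β : Term C X, ¬ occurs y β → r (subst y β t) (subst y β t') := by
  intro t
  induction t with
  | const c =>
      intro t' hr h1 h2 β hβ
      simp only [subst] at *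
      rcases h.const_cases c t' (h.equiv.symm hr) with h' | ⟨x, hx⟩
      · subst h'; simpa [subst] using hr
      · subst hx
        by_cases hxy : x = y
        · subst hxy
          simp only [subst, if_pos rfl] at h1 h2
          exact absurd ((h.const_eq _ _ h1).symm.trans (h.const_eq _ _ h2))
            hc
        · simpa [subst, hxy] using hr
  | var x =>
      intro t' hr h1 h2 β hβ
      by_cases hxy : x = y
      · simp only [subst, if_pos hxy] at h1 h2 ⊢
        -- t'[c₁] ≅ const c₁
        rcases h.const_cases c₁ _ (h.equiv.symm h1) with hcc | ⟨x', hx'⟩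
        · -- t'[y←c₁] = const c₁ : so t' = const c₁ or t' = var y
          cases t' with
          | const c =>
              simp only [subst] at hcc
              cases hcc
              simp only [subst] at h2
              exact absurd (h.const_eq _ _ (h.equiv.symm h2)) hc
          | var x' =>
              by_cases hx'y : x' = y
              · simp only [subst, if_pos hx'y]
                exact h.equiv.refl β
              · simp only [subst, if_neg hx'y] at hcc
                exact absurd hcc (by intro hh; cases hh)
          | add a b =>
              simp only [subst] at hcc
              exact absurd hcc (by intro hh; cases hh)
        · -- t'[y←c₁] = var x' : so t' = var x', x' ≠ y
          cases t' with
          | const c => simp only [subst] at hx'; exact absurd hx' (by intro hh; cases hh)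
          | var x'' =>
              by_cases hx''y : x'' = y
              · simp only [subst, if_pos hx''y] at hx'
                exact absurd hx' (by intro hh; cases hh)
              · simp only [subst, if_neg hx''y] at h1 h2
                exact absurd (h.equiv.trans h1 (h.equiv.symm h2)) (fun hh => hc (h.const_eq _ _ hh))
          | add a b => simp only [subst] at hx'; exact absurd hx' (by intro hh; cases hh)
      · -- x ≠ y : t[·] = var x
        simp only [subst, if_neg hxy] at h1 h2 ⊢
        by_cases hocc : occurs y t'
        · exact absurd (h.equiv.trans (h.equiv.symm h1) h2)
            (fun hh => occurs_contra r h y c₁ c₂ hc t' hocc hh)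
        · rw [subst_of_not_occurs y β t' hocc]
          simpa [subst, if_neg hxy] using hr
  | add a b iha ihb =>
      intro t' hr h1 h2 β hβ
      cases t' with
      | const c =>
          rcases h.const_cases c _ hr with hcc | ⟨x, hx⟩
          · exact absurd hcc (by intro hh; cases hh)
          · exact absurd hx (by intro hh; cases hh)
      | var x =>
          by_cases hxy : x = y
          · simp only [subst, if_pos hxy] at h1
            rcases h.const_cases c₁ _ h1 with hcc | ⟨x', hx'⟩
            · exact absurd hcc (by intro hh; cases hh)
            · exact absurd hx' (by intro hh; cases hh)
          · simp only [subst, if_neg hxy] at h1 h2 ⊢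
            by_cases hocc : occurs y (add a b)
            · exact absurd (h.equiv.trans h1 (h.equiv.symm h2))
                (fun hh => occurs_contra r h y c₁ c₂ hc _ hocc hh)
            · have e := subst_of_not_occurs y β (add a b) hocc
              simp only [subst, add.injEq] at e
              rw [e.1, e.2]
              exact hr
      | add a' b' =>
          rw [← h.add_iff] at hr
          simp only [subst] at h1 h2 ⊢
          rw [← h.add_iff] at h1 h2 ⊢
          exact ⟨iha a' hr.1 h1.1 h2.1 β hβ, ihb b' hr.2 h1.2 h2.2 β hβ⟩

open Term in
/-- `f_{y=*}(P) = P ∧ f_{y=c₁}(P) ∧ f_{y=c₂}(P)` for distinct constants. -/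
theorem ndet_eq_two_constants {C X : Type} [Countable C] [Countable X] [DecidableEq X]
    (r : Term C X → Term C X → Prop) (h : IsCongruence r)
    (y : X) (c₁ c₂ : C) (hc : c₁ ≠ c₂) :
    ndet y r = (fun t t' => r t t' ∧
      transfer y (Term.const c₁) r t t' ∧ transfer y (Term.const c₂) r t t') := by
  funext t t'
  apply propext
  constructor
  · rintro ⟨hr, hall⟩
    exact ⟨hr, hall (const c₁) (fun hh => hh), hall (const c₂) (fun hh => hh)⟩
  · rintro ⟨hr, h1, h2⟩
    exact ⟨hr, fun β hβ => key_lemma r h y c₁ c₂ hc t t' hr h1 h2 β hβ⟩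
end

section
/- If t is a term containing the variable y, P is a congruence, and c1 ≠ c2 are distinct constants, then t[y←c1] is not congruent to t[y←c2] in P. -/
open Term in
/-- substituting distinct constants for an occurring variable yields
non-congruent terms. -/
theorem subst_distinct_constants_not_congruent {C X : Type} [Countable C] [Countable X]
    [DecidableEq X]
    (r : Term C X → Term C X → Prop) (h : IsCongruence r)
    (t : Term C X) (y : X) (hy : occurs y t) (c₁ c₂ : C) (hc : c₁ ≠ c₂) :
    ¬ r (subst y (const c₁) t) (subst y (const c₂) t) := by
  induction t with
  | const c => exact absurd hy id
  | var x =>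
    simp only [occurs] at hy
    simp only [subst, if_pos hy]
    exact fun hr => hc (h.const_eq _ _ hr)
  | add t₁ t₂ ih₁ ih₂ =>
    intro hr
    have := (h.add_iff _ _ _ _).mpr hr
    rcases hy with hy | hy
    · exact ih₁ hy this.1
    · exact ih₂ hy this.2
end
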